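/- Let (T, ρ) be a compact metric space, (Ω, 𝓕, P) a probability space, and U : T → Ω → ℝ a stochastic process such that for every ω ∈ Ω the sample path t ↦ U(t)(ω) is continuous and for every t ∈ T the random variable U(t) is uniformly distributed on the interval (0,1). Assume that for every integer m ≥ 1, every t ∈ T^m and every x ∈ [0,∞)^m the tail-copula limit R_t(x) = lim_{s↓0} s⁻¹ P[U(t₁) ≤ s·x₁, …, U(t_m) ≤ s·x_m] exists. Assume moreover there exist positive scalars c₁, c₂, u₀, ε₀ and, for every ε ∈ (0, ε₀], a scalar δ(ε) > 0, such that for all (u, ε, s) ∈ (0,u₀] × (0,ε₀] × T: P[ sup_{t : ρ(s,t) ≤ δ(ε)} U(t) > u·exp(c₁ε²) | inf_{t : ρ(s,t) ≤ δ(ε)} U(t) ≤ u ] ≤ c₂·ε². Then for every d ≥ 1 the map (t, x) ↦ R_t(x) is jointly continuous on T^d × [0,∞)^d, where T^d × [0,∞)^d carries the product topology induced by the metric ρ on each T-factor and the absolute value metric on each [0,∞)-factor. -/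

import Mathlib

/-!
Write `R_t(x)` for the tail copula. The uniform margins give `0 ≤ R_t(x) ≤ x_j`, and `R_t` is
monotone and positively homogeneous in `x`. Homogeneity squeezes `R_t(y)` between
`(1 ∓ θ) R_t(x)` when `y` is within a factor `1 ± θ` of `x`, which is continuity in `x`, uniformly
in `t`, at points with positive coordinates; at a point with `x_j = 0` the bound `R ≤ x_j` suffices.
Since `U(t)` need not be measurable, only monotonicity and subadditivity of `P` are available,
which is why the argument goes through homogeneity rather than a Lipschitz bound.

For continuity in `t`, let `ρ(t_j, t'_j) ≤ δ(ε)` and put `a = exp (c₁ ε²)`, `k = c₂ ε²`. The event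
`U(t'_j) ≤ s x_j < a⁻¹ U(t_j)` forces the ball around `t_j` to have infimum `≤ s x_j` and supremum
`> a s x_j`, so by the hypothesis it has probability at most `k P[inf ≤ s x_j]`, and
`P[inf ≤ u] ≤ a u + k P[inf ≤ u]` bounds the latter by `a u / (1 - k)`. A union bound, division by
`s` and `s ↓ 0` give `R_{t'}(x) ≤ a R_t(x) + k a / (1 - k) ∑ x_j`, and `a → 1`, `k → 0` as `ε → 0`.
-/

open MeasureTheory Filter Set Topology

section TailCopula

variable {Ω ι : Type*} [MeasurableSpace Ω] {P : Measure Ω} {V : ι → Ω → ℝ} {x y : ι → ℝ}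
  {s : ℝ}

lemma measureReal_inter_le_mul_of_div_le [IsFiniteMeasure P] {A B : Set Ω} {k : ℝ}
    (h : P.real (A ∩ B) / P.real B ≤ k) : P.real (A ∩ B) ≤ k * P.real B := by
  rcases (measureReal_nonneg (μ := P) (s := B)).eq_or_lt with hB | hB
  · rw [← hB, mul_zero]
    exact hB ▸ measureReal_mono inter_subset_right
  · rwa [div_le_iff₀ hB] at h

noncomputable def tailRatio (P : Measure Ω) (V : ι → Ω → ℝ) (x : ι → ℝ) (s : ℝ) : ℝ :=
  P.real {ω | ∀ j, V j ω ≤ s * x j} / s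

lemma tailRatio_nonneg (hs : 0 ≤ s) : 0 ≤ tailRatio P V x s :=
  div_nonneg measureReal_nonneg hs

lemma tailRatio_mono [IsFiniteMeasure P] (hs : 0 ≤ s) (hxy : x ≤ y) :
    tailRatio P V x s ≤ tailRatio P V y s := by
  refine div_le_div_of_nonneg_right (measureReal_mono fun ω hω j => ?_) hs
  exact (hω j).trans (mul_le_mul_of_nonneg_left (hxy j) hs)

lemma tailRatio_smul {c : ℝ} (hc : c ≠ 0) (s : ℝ) :
    tailRatio P V (c • x) s = c * tailRatio P V x (s * c) := by
  simp only [tailRatio, Pi.smul_apply, smul_eq_mul, ← mul_assoc]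
  rcases eq_or_ne s 0 with rfl | hs
  · simp
  · field_simp

lemma tailRatio_le_apply [IsFiniteMeasure P] {j : ι}
    (hV : ∀ y ∈ Icc (0:ℝ) 1, P.real {ω | V j ω ≤ y} = y)
    (hs : 0 < s) (hx : 0 ≤ x j) (hsx : s * x j ≤ 1) : tailRatio P V x s ≤ x j := by
  rw [tailRatio, div_le_iff₀ hs, mul_comm, ← hV _ ⟨by positivity, hsx⟩]
  exact measureReal_mono fun ω hω => hω j

lemma measureReal_forall_le_le_add_sum [IsFiniteMeasure P] [Fintype ι] (W : ι → Ω → ℝ)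
    (y : ι → ℝ) :
    P.real {ω | ∀ j, V j ω ≤ x j} ≤
      P.real {ω | ∀ j, W j ω ≤ y j} + ∑ j, P.real {ω | V j ω ≤ x j ∧ y j < W j ω} := by
  have hcover : {ω | ∀ j, V j ω ≤ x j} ⊆
      {ω | ∀ j, W j ω ≤ y j} ∪ ⋃ j, {ω | V j ω ≤ x j ∧ y j < W j ω} := by
    intro ω hω
    by_cases h : ∀ j, W j ω ≤ y j
    · exact Or.inl h
    · obtain ⟨j, hj⟩ := not_forall.1 h
      exact Or.inr (mem_iUnion.2 ⟨j, hω j, not_le.1 hj⟩)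
  refine (measureReal_mono hcover (measure_ne_top P _)).trans
    ((measureReal_union_le _ _).trans ?_)
  gcongr
  exact measureReal_iUnion_fintype_le _

def IsTailCopula (P : Measure Ω) (V : ι → Ω → ℝ) (r : (ι → ℝ) → ℝ) : Prop :=
  ∀ x, 0 ≤ x → Tendsto (tailRatio P V x) (𝓝[>] 0) (𝓝 (r x))

namespace IsTailCopula

variable {r : (ι → ℝ) → ℝ}

lemma nonneg (hr : IsTailCopula P V r) (hx : 0 ≤ x) : 0 ≤ r x :=
  ge_of_tendsto (hr x hx)
    (eventually_nhdsWithin_of_forall fun _ hs => tailRatio_nonneg (le_of_lt hs))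

lemma mono [IsFiniteMeasure P] (hr : IsTailCopula P V r) (hx : 0 ≤ x) (hxy : x ≤ y) :
    r x ≤ r y :=
  le_of_tendsto_of_tendsto (hr x hx) (hr y (hx.trans hxy))
    (eventually_nhdsWithin_of_forall fun _ hs => tailRatio_mono (le_of_lt hs) hxy)

lemma smul (hr : IsTailCopula P V r) (hx : 0 ≤ x) {c : ℝ} (hc : 0 < c) : r (c • x) = c * r x := by
  have hscale : Tendsto (· * c) (𝓝[>] (0:ℝ)) (𝓝[>] 0) := by
    refine tendsto_nhdsWithin_iff.2 ⟨?_, eventually_nhdsWithin_of_forall fun s hs => mul_pos hs hc⟩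
    simpa using (tendsto_id.mul_const c).mono_left (nhdsWithin_le_nhds (a := (0:ℝ)))
  refine tendsto_nhds_unique (hr _ (smul_nonneg hc.le hx)) ?_
  rw [show tailRatio P V (c • x) = fun s => c * tailRatio P V x (s * c) from
    funext (tailRatio_smul hc.ne')]
  exact ((hr x hx).comp hscale).const_mul c

lemma le_apply [IsFiniteMeasure P] (hr : IsTailCopula P V r) (hx : 0 ≤ x) {j : ι}
    (hV : ∀ y ∈ Icc (0:ℝ) 1, P.real {ω | V j ω ≤ y} = y) : r x ≤ x j := by
  refine le_of_tendsto (hr x hx) ?_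
  have hsmall : ∀ᶠ s in 𝓝 (0:ℝ), s * x j < 1 :=
    (continuous_id.mul continuous_const).continuousAt.eventually_lt continuousAt_const (by simp)
  filter_upwards [self_mem_nhdsWithin, nhdsWithin_le_nhds hsmall] with s hs hsx
  exact tailRatio_le_apply hV hs (hx j) hsx.le

lemma le_sum [IsFiniteMeasure P] [Fintype ι] [Nonempty ι] (hr : IsTailCopula P V r)
    (hx : 0 ≤ x) (hV : ∀ j, ∀ y ∈ Icc (0:ℝ) 1, P.real {ω | V j ω ≤ y} = y) : r x ≤ ∑ j, x j :=
  (hr.le_apply hx (hV (Classical.arbitrary ι))).trans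
    (Finset.single_le_sum (fun i _ => hx i) (Finset.mem_univ _))

lemma mul_le_of_smul_le [IsFiniteMeasure P] (hr : IsTailCopula P V r) (hx : 0 ≤ x) {c : ℝ}
    (hc : 0 < c) (h : c • x ≤ y) : c * r x ≤ r y :=
  hr.smul hx hc ▸ hr.mono (smul_nonneg hc.le hx) h

lemma le_mul_of_le_smul [IsFiniteMeasure P] (hr : IsTailCopula P V r) (hx : 0 ≤ x) (hy : 0 ≤ y)
    {c : ℝ} (hc : 0 < c) (h : y ≤ c • x) : r y ≤ c * r x :=
  hr.smul hx hc ▸ hr.mono hy h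

lemma abs_sub_le [IsFiniteMeasure P] (hr : IsTailCopula P V r) (hx : 0 ≤ x) (hy : 0 ≤ y)
    {θ : ℝ} (hθ : 0 ≤ θ) (hlow : (1 - θ) • x ≤ y) (hupp : y ≤ (1 + θ) • x) :
    |r y - r x| ≤ θ * r x := by
  have hupper := hr.le_mul_of_le_smul hx hy (by linarith) hupp
  have hlower : (1 - θ) * r x ≤ r y := by
    rcases lt_or_ge 0 (1 - θ) with hθ1 | hθ1
    · exact hr.mul_le_of_smul_le hx hθ1 hlow
    · nlinarith [hr.nonneg hx, hr.nonneg hy]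
  rw [abs_sub_le_iff]
  constructor <;> linarith

end IsTailCopula

end TailCopula

section Ball

variable {Ω T : Type*} [MetricSpace T] {U : T → Ω → ℝ}

noncomputable def ballSup (U : T → Ω → ℝ) (s : T) (δ : ℝ) (ω : Ω) : ℝ :=
  ⨆ t : {t : T // dist s t ≤ δ}, U t.1 ω

noncomputable def ballInf (U : T → Ω → ℝ) (s : T) (δ : ℝ) (ω : Ω) : ℝ :=
  ⨅ t : {t : T // dist s t ≤ δ}, U t.1 ω

variable [CompactSpace T]

lemma le_ballSup {ω : Ω} (hU : Continuous fun t => U t ω) (s : T) {δ : ℝ} (hδ : 0 ≤ δ) :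
    U s ω ≤ ballSup U s δ ω := by
  have hbdd : BddAbove (range fun t : {t : T // dist s t ≤ δ} => U t.1 ω) :=
    (isCompact_range hU).bddAbove.mono (range_comp_subset_range Subtype.val fun t => U t ω)
  exact le_ciSup hbdd ⟨s, by simpa using hδ⟩

lemma ballInf_le {ω : Ω} (hU : Continuous fun t => U t ω) {s t : T} {δ : ℝ}
    (hst : dist s t ≤ δ) : ballInf U s δ ω ≤ U t ω := by
  have hbdd : BddBelow (range fun t : {t : T // dist s t ≤ δ} => U t.1 ω) :=
    (isCompact_range hU).bddBelow.mono (range_comp_subset_range Subtype.val fun t => U t ω)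
  exact ciInf_le hbdd ⟨t, hst⟩

variable [MeasurableSpace Ω] {P : Measure Ω}

/-- `P[sup_{B(s,δ)} U > a u | inf_{B(s,δ)} U ≤ u] ≤ k` for `u ∈ (0, u₀]`, multiplied out. -/
def BallCondition (P : Measure Ω) (U : T → Ω → ℝ) (u₀ a k δ : ℝ) : Prop :=
  ∀ u ∈ Ioc (0:ℝ) u₀, ∀ s : T,
    P.real ({ω | u * a < ballSup U s δ ω} ∩ {ω | ballInf U s δ ω ≤ u})
      ≤ k * P.real {ω | ballInf U s δ ω ≤ u}

namespace BallCondition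

variable [IsFiniteMeasure P] {u₀ a k δ : ℝ} (hcond : BallCondition P U u₀ a k δ)
  (hcont : ∀ ω, Continuous fun t => U t ω)
  (hunif : ∀ t, ∀ y ∈ Icc (0:ℝ) 1, P.real {ω | U t ω ≤ y} = y)
include hcond hcont hunif

lemma measureReal_ballInf_le (hδ : 0 ≤ δ) (hk : k < 1) {u : ℝ} (hu : u ∈ Ioc 0 u₀)
    (hua : u * a ∈ Icc (0:ℝ) 1) (s : T) :
    P.real {ω | ballInf U s δ ω ≤ u} ≤ u * a / (1 - k) := by
  have hcover : {ω | ballInf U s δ ω ≤ u} ⊆ {ω | U s ω ≤ u * a} ∪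
      ({ω | u * a < ballSup U s δ ω} ∩ {ω | ballInf U s δ ω ≤ u}) := fun ω hω =>
    (le_or_gt (U s ω) (u * a)).imp id fun h => ⟨h.trans_le (le_ballSup (hcont ω) s hδ), hω⟩
  have := (measureReal_mono hcover (measure_ne_top P _)).trans (measureReal_union_le _ _)
  rw [le_div_iff₀ (by linarith)]
  nlinarith [hunif s _ hua, hcond u hu s]

lemma measureReal_le_and_mul_lt_le (hk : 0 ≤ k) (hk1 : k < 1) {s t : T} (hst : dist s t ≤ δ) {u : ℝ}
    (hu : u ∈ Icc 0 u₀) (hua : u * a ∈ Icc (0:ℝ) 1) :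
    P.real {ω | U t ω ≤ u ∧ u * a < U s ω} ≤ k * (u * a / (1 - k)) := by
  rcases hu.1.eq_or_lt with rfl | hu0
  · have hnull : P.real {ω | U t ω ≤ 0} = 0 := by simpa using hunif t 0 (by simp)
    have hsub : {ω | U t ω ≤ 0 ∧ 0 * a < U s ω} ⊆ {ω | U t ω ≤ 0} := fun _ => And.left
    rw [measureReal_mono_null hsub hnull]
    simp
  have hδ : 0 ≤ δ := dist_nonneg.trans hst
  calc P.real {ω | U t ω ≤ u ∧ u * a < U s ω}
      ≤ P.real ({ω | u * a < ballSup U s δ ω} ∩ {ω | ballInf U s δ ω ≤ u}) :=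
        measureReal_mono fun ω ⟨hle, hlt⟩ =>
          ⟨hlt.trans_le (le_ballSup (hcont ω) s hδ), (ballInf_le (hcont ω) hst).trans hle⟩
    _ ≤ k * P.real {ω | ballInf U s δ ω ≤ u} := hcond u ⟨hu0, hu.2⟩ s
    _ ≤ k * (u * a / (1 - k)) := by
        gcongr
        exact hcond.measureReal_ballInf_le hcont hunif hδ hk1 ⟨hu0, hu.2⟩ hua s

variable {ι : Type*} [Fintype ι] {t t' : ι → T} {x : ι → ℝ}

lemma tailRatio_le (ha : 0 ≤ a) (hk : 0 ≤ k) (hk1 : k < 1)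
    (htt' : ∀ j, dist (t j) (t' j) ≤ δ) (hx : 0 ≤ x) {s : ℝ} (hs : 0 < s)
    (hsx : ∀ j, s * x j ≤ u₀ ∧ s * x j * a ≤ 1) :
    tailRatio P (fun j => U (t' j)) x s ≤
      tailRatio P (fun j => U (t j)) (a • x) s + k * a / (1 - k) * ∑ j, x j := by
  rw [tailRatio, tailRatio, div_add' _ _ _ hs.ne', div_le_div_iff_of_pos_right hs]
  have hcoord : ∀ j, P.real {ω | U (t' j) ω ≤ s * x j ∧ s * (a • x) j < U (t j) ω} ≤
      k * (s * x j * a / (1 - k)) := fun j => by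
    have hsxj : 0 ≤ s * x j := mul_nonneg hs.le (hx j)
    rw [Pi.smul_apply, smul_eq_mul, mul_left_comm, mul_comm a]
    exact hcond.measureReal_le_and_mul_lt_le hcont hunif hk hk1 (htt' j) ⟨hsxj, (hsx j).1⟩
      ⟨mul_nonneg hsxj ha, (hsx j).2⟩
  calc P.real {ω | ∀ j, U (t' j) ω ≤ s * x j}
      ≤ P.real {ω | ∀ j, U (t j) ω ≤ s * (a • x) j} +
          ∑ j, P.real {ω | U (t' j) ω ≤ s * x j ∧ s * (a • x) j < U (t j) ω} :=
        measureReal_forall_le_le_add_sum _ _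
    _ ≤ P.real {ω | ∀ j, U (t j) ω ≤ s * (a • x) j} + ∑ j, k * (s * x j * a / (1 - k)) := by
        gcongr with j
        exact hcoord j
    _ = P.real {ω | ∀ j, U (t j) ω ≤ s * (a • x) j} + k * a / (1 - k) * (∑ j, x j) * s := by
        rw [mul_assoc, Finset.sum_mul, Finset.mul_sum]
        congr 1
        exact Finset.sum_congr rfl fun j _ => by ring

lemma tailCopula_le {F : (ι → T) → (ι → ℝ) → ℝ}
    (hF : ∀ t, IsTailCopula P (fun j => U (t j)) (F t)) (hu₀ : 0 < u₀) (ha : 0 < a)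
    (hk : 0 ≤ k) (hk1 : k < 1) (htt' : ∀ j, dist (t j) (t' j) ≤ δ) (hx : 0 ≤ x) :
    F t' x ≤ a * F t x + k * a / (1 - k) * ∑ j, x j := by
  have hsmall : ∀ᶠ s in 𝓝 (0:ℝ), ∀ j, s * x j < u₀ ∧ s * x j * a < 1 :=
    eventually_all.2 fun j =>
      ((continuous_id.mul continuous_const).continuousAt.eventually_lt continuousAt_const
          (by simpa using hu₀)).and
        (((continuous_id.mul continuous_const).mul continuous_const).continuousAt.eventually_lt
          continuousAt_const (by simp))
  have hev : ∀ᶠ s in 𝓝[>] 0, tailRatio P (fun j => U (t' j)) x s ≤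
      tailRatio P (fun j => U (t j)) (a • x) s + k * a / (1 - k) * ∑ j, x j := by
    filter_upwards [self_mem_nhdsWithin, nhdsWithin_le_nhds hsmall] with s hs hsx
    exact hcond.tailRatio_le hcont hunif ha.le hk hk1 htt' hx hs
      fun j => ⟨(hsx j).1.le, (hsx j).2.le⟩
  calc F t' x ≤ F t (a • x) + k * a / (1 - k) * ∑ j, x j :=
        le_of_tendsto_of_tendsto (hF t' x hx) ((hF t _ (smul_nonneg ha.le hx)).add_const _) hev
    _ = a * F t x + k * a / (1 - k) * ∑ j, x j := by rw [(hF t).smul hx ha]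

end BallCondition

end Ball

section Continuity

variable {Ω ι T : Type*} [MetricSpace T] [MeasurableSpace Ω] {P : Measure Ω}
  [IsFiniteMeasure P] {U : T → Ω → ℝ} {F : (ι → T) → (ι → ℝ) → ℝ}

variable (hF : ∀ t, IsTailCopula P (fun j => U (t j)) (F t))
  (hunif : ∀ t, ∀ y ∈ Icc (0:ℝ) 1, P.real {ω | U t ω ≤ y} = y)
include hF hunif

lemma exists_abs_tailCopula_sub_le [Fintype ι] [Nonempty ι] [CompactSpace T]
    (hcont : ∀ ω, Continuous fun t => U t ω) {c₁ c₂ u₀ ε₀ : ℝ} (hc₁ : 0 ≤ c₁) (hc₂ : 0 ≤ c₂)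
    (hu₀ : 0 < u₀) (hε₀ : 0 < ε₀)
    {δf : ℝ → ℝ} (hδf : ∀ ε ∈ Ioc (0:ℝ) ε₀, 0 < δf ε)
    (hcond : ∀ ε ∈ Ioc (0:ℝ) ε₀,
      BallCondition P U u₀ (Real.exp (c₁ * ε ^ 2)) (c₂ * ε ^ 2) (δf ε))
    {η : ℝ} (hη : 0 < η) :
    ∃ δ > 0, ∀ t t' : ι → T, (∀ j, dist (t j) (t' j) ≤ δ) →
      ∀ x, 0 ≤ x → |F t' x - F t x| ≤ η * ∑ j, x j := by
  have hsmall : ∀ᶠ ε in 𝓝 (0:ℝ), c₂ * ε ^ 2 < 1 ∧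
      Real.exp (c₁ * ε ^ 2) - 1 + c₂ * ε ^ 2 * Real.exp (c₁ * ε ^ 2) / (1 - c₂ * ε ^ 2) < η := by
    have hk : Continuous fun ε : ℝ => c₂ * ε ^ 2 := by fun_prop
    have hg : ContinuousAt (fun ε : ℝ =>
        Real.exp (c₁ * ε ^ 2) - 1 + c₂ * ε ^ 2 * Real.exp (c₁ * ε ^ 2) / (1 - c₂ * ε ^ 2)) 0 := by
      fun_prop (disch := norm_num)
    exact (hk.continuousAt.eventually_lt continuousAt_const (by simp)).and
      (hg.eventually_lt continuousAt_const (by simpa using hη))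
  obtain ⟨ε, ⟨hk1, hg⟩, hε⟩ :=
    ((hsmall.filter_mono nhdsWithin_le_nhds).and (Ioc_mem_nhdsGT hε₀)).exists
  refine ⟨δf ε, hδf ε hε, fun t t' htt' x hx => ?_⟩
  have ha : 1 ≤ Real.exp (c₁ * ε ^ 2) := Real.one_le_exp (by positivity)
  have hk : 0 ≤ c₂ * ε ^ 2 := by positivity
  have hle := (hcond ε hε).tailCopula_le hcont hunif hF hu₀ (by positivity) hk hk1 htt' hx
  have hge := (hcond ε hε).tailCopula_le hcont hunif hF hu₀ (by positivity) hk hk1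
    (fun j => (dist_comm _ _).trans_le (htt' j)) hx
  have hM : 0 ≤ ∑ j, x j := Finset.sum_nonneg fun j _ => hx j
  have hbound : ∀ t, 0 ≤ F t x ∧ F t x ≤ ∑ j, x j := fun t =>
    ⟨(hF t).nonneg hx, (hF t).le_sum hx fun j => hunif (t j)⟩
  rw [abs_sub_le_iff]
  constructor <;> nlinarith [hbound t, hbound t', mul_le_mul_of_nonneg_right hg.le hM]

lemma continuousWithinAt_tailCopula_of_apply_eq_zero {t : ι → T} {x : ι → ℝ} (hx : 0 ≤ x)
    {j : ι} (hxj : x j = 0) :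
    ContinuousWithinAt (fun p : (ι → T) × (ι → ℝ) => F p.1 p.2) {p | ∀ j, 0 ≤ p.2 j} (t, x) := by
  have hFx : F t x = 0 :=
    le_antisymm (hxj ▸ (hF t).le_apply hx (hunif (t j))) ((hF t).nonneg hx)
  have hcoord : Tendsto (fun p : (ι → T) × (ι → ℝ) => p.2 j)
      (𝓝[{p | ∀ j, 0 ≤ p.2 j}] (t, x)) (𝓝 0) :=
    hxj ▸ ((continuous_apply j).comp continuous_snd).continuousWithinAt
  rw [ContinuousWithinAt, hFx]
  exact tendsto_of_tendsto_of_tendsto_of_le_of_le' tendsto_const_nhds hcoord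
    (eventually_nhdsWithin_of_forall fun p hp => (hF p.1).nonneg hp)
    (eventually_nhdsWithin_of_forall fun p hp => (hF p.1).le_apply hp (hunif (p.1 j)))

lemma continuousWithinAt_tailCopula_of_pos [Fintype ι] [Nonempty ι]
    (hequi : ∀ η > 0, ∃ δ > 0, ∀ t t' : ι → T, (∀ j, dist (t j) (t' j) ≤ δ) →
      ∀ x, 0 ≤ x → |F t' x - F t x| ≤ η * ∑ j, x j)
    {t : ι → T} {x : ι → ℝ} (hx : ∀ j, 0 < x j) :
    ContinuousWithinAt (fun p : (ι → T) × (ι → ℝ) => F p.1 p.2) {p | ∀ j, 0 ≤ p.2 j} (t, x) := by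
  rw [ContinuousWithinAt, Metric.tendsto_nhds]
  intro η hη
  set M := ∑ j, x j
  have hM : 0 < M := Finset.sum_pos (fun j _ => hx j) Finset.univ_nonempty
  obtain ⟨δ, hδ, hFδ⟩ := hequi (η / (2 * M)) (by positivity)
  obtain ⟨θ, hθ, hθM⟩ : ∃ θ > 0, θ * M < η / 2 :=
    ⟨η / (3 * M), by positivity, by field_simp; linarith⟩
  have ht : ∀ᶠ t' in 𝓝 t, ∀ j, dist (t j) (t' j) ≤ δ := by
    filter_upwards [Metric.ball_mem_nhds t hδ] with t' ht' j
    exact (dist_le_pi_dist t t' j).trans (dist_comm t t' ▸ ht'.le)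
  have hx' : ∀ᶠ y in 𝓝 x, ∀ j, y j ∈ Icc ((1 - θ) * x j) ((1 + θ) * x j) :=
    eventually_all.2 fun j => (continuous_apply j).continuousAt.preimage_mem_nhds
      (Icc_mem_nhds (by nlinarith [hx j]) (by nlinarith [hx j]))
  filter_upwards [self_mem_nhdsWithin, nhdsWithin_le_nhds (ht.prod_nhds hx')]
    with p hp ⟨hpt, hpx⟩
  have hnear : |F p.1 p.2 - F p.1 x| ≤ θ * F p.1 x :=
    (hF p.1).abs_sub_le (fun j => (hx j).le) hp hθ.le (fun j => (hpx j).1) (fun j => (hpx j).2)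
  have hbound : F p.1 x ≤ M := (hF p.1).le_sum (fun j => (hx j).le) fun j => hunif (p.1 j)
  rw [Real.dist_eq]
  calc |F p.1 p.2 - F t x| ≤ |F p.1 p.2 - F p.1 x| + |F p.1 x - F t x| := abs_sub_le _ _ _
    _ ≤ θ * M + η / (2 * M) * M :=
        add_le_add (hnear.trans (by gcongr)) (hFδ t p.1 hpt x fun j => (hx j).le)
    _ < η := by
        have : η / (2 * M) * M = η / 2 := by field_simp
        linarith

end Continuity

theorem empirical_tail_copulas_stmt12_general
    {Ω : Type*} [MeasurableSpace Ω] (P : Measure Ω) [IsProbabilityMeasure P]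
    {T : Type*} [MetricSpace T] [CompactSpace T]
    (U : T → Ω → ℝ)
    (hcont : ∀ ω : Ω, Continuous fun t => U t ω)
    (hunif : ∀ t : T, ∀ x ∈ Icc (0:ℝ) 1, P {ω | U t ω ≤ x} = ENNReal.ofReal x)
    (R : ∀ m : ℕ, (Fin m → T) → (Fin m → ℝ) → ℝ)
    (hR : ∀ m : ℕ, 1 ≤ m → ∀ (t : Fin m → T) (x : Fin m → ℝ), (∀ j, 0 ≤ x j) →
      Tendsto (fun s : ℝ => (P {ω | ∀ j, U (t j) ω ≤ s * x j}).toReal / s)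
        (𝓝[>] (0:ℝ)) (𝓝 (R m t x)))
    (c₁ c₂ u₀ ε₀ : ℝ) (hc₁ : 0 < c₁) (hc₂ : 0 < c₂) (hu₀ : 0 < u₀) (hε₀ : 0 < ε₀)
    (δf : ℝ → ℝ) (hδf : ∀ ε ∈ Ioc (0:ℝ) ε₀, 0 < δf ε)
    (hcond : ∀ u ∈ Ioc (0:ℝ) u₀, ∀ ε ∈ Ioc (0:ℝ) ε₀, ∀ s : T,
      (P ({ω | u * Real.exp (c₁ * ε ^ 2) < ⨆ t : {t : T // dist s t ≤ δf ε}, U t.1 ω}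
          ∩ {ω | (⨅ t : {t : T // dist s t ≤ δf ε}, U t.1 ω) ≤ u})).toReal
        / (P {ω | (⨅ t : {t : T // dist s t ≤ δf ε}, U t.1 ω) ≤ u}).toReal
      ≤ c₂ * ε ^ 2) :
    ∀ d : ℕ, 1 ≤ d →
      ContinuousOn (fun p : (Fin d → T) × (Fin d → ℝ) => R d p.1 p.2)
        {p : (Fin d → T) × (Fin d → ℝ) | ∀ j, 0 ≤ p.2 j} := by
  intro d hd
  have : Nonempty (Fin d) := ⟨⟨0, hd⟩⟩
  have hunif' : ∀ t, ∀ y ∈ Icc (0:ℝ) 1, P.real {ω | U t ω ≤ y} = y := fun t y hy => by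
    rw [measureReal_def, hunif t y hy, ENNReal.toReal_ofReal hy.1]
  have hF : ∀ t, IsTailCopula P (fun j => U (t j)) (R d t) := fun t x hx => hR d hd t x hx
  have hball : ∀ ε ∈ Ioc (0:ℝ) ε₀,
      BallCondition P U u₀ (Real.exp (c₁ * ε ^ 2)) (c₂ * ε ^ 2) (δf ε) := fun ε hε u hu s =>
    measureReal_inter_le_mul_of_div_le (hcond u hu ε hε s)
  rintro ⟨t, x⟩ (hx : ∀ j, 0 ≤ x j)
  by_cases hpos : ∀ j, 0 < x j
  · exact continuousWithinAt_tailCopula_of_pos hF hunif' (fun η hη =>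
      exists_abs_tailCopula_sub_le hF hunif' hcont hc₁.le hc₂.le hu₀ hε₀ hδf hball hη) hpos
  · obtain ⟨j, hj⟩ := not_forall.1 hpos
    exact continuousWithinAt_tailCopula_of_apply_eq_zero hF hunif' hx
      (le_antisymm (not_lt.1 hj) (hx j))

/-- Corollary (joint continuity of the tail copula `(t, x) ↦ R_t(x)` on
`T^d × [0,∞)^d` under the covering-by-balls condition). -/
theorem empirical_tail_copulas_stmt12
    {Ω : Type*} [MeasurableSpace Ω] (P : Measure Ω) [IsProbabilityMeasure P]
    {T : Type*} [MetricSpace T] [CompactSpace T] [Nonempty T]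
    (U : T → Ω → ℝ)
    (hcont : ∀ ω : Ω, Continuous fun t => U t ω)
    (hunif : ∀ t : T, ∀ x ∈ Icc (0:ℝ) 1, P {ω | U t ω ≤ x} = ENNReal.ofReal x)
    (R : ∀ m : ℕ, (Fin m → T) → (Fin m → ℝ) → ℝ)
    (hR : ∀ m : ℕ, 1 ≤ m → ∀ (t : Fin m → T) (x : Fin m → ℝ), (∀ j, 0 ≤ x j) →
      Tendsto (fun s : ℝ => (P {ω | ∀ j, U (t j) ω ≤ s * x j}).toReal / s)
        (𝓝[>] (0:ℝ)) (𝓝 (R m t x)))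
    (c₁ c₂ u₀ ε₀ : ℝ) (hc₁ : 0 < c₁) (hc₂ : 0 < c₂) (hu₀ : 0 < u₀) (hε₀ : 0 < ε₀)
    (δf : ℝ → ℝ) (hδf : ∀ ε ∈ Ioc (0:ℝ) ε₀, 0 < δf ε)
    (hcond : ∀ u ∈ Ioc (0:ℝ) u₀, ∀ ε ∈ Ioc (0:ℝ) ε₀, ∀ s : T,
      (P ({ω | u * Real.exp (c₁ * ε ^ 2) < ⨆ t : {t : T // dist s t ≤ δf ε}, U t.1 ω}
          ∩ {ω | (⨅ t : {t : T // dist s t ≤ δf ε}, U t.1 ω) ≤ u})).toReal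
        / (P {ω | (⨅ t : {t : T // dist s t ≤ δf ε}, U t.1 ω) ≤ u}).toReal
      ≤ c₂ * ε ^ 2) :
    ∀ d : ℕ, 1 ≤ d →
      ContinuousOn (fun p : (Fin d → T) × (Fin d → ℝ) => R d p.1 p.2)
        {p : (Fin d → T) × (Fin d → ℝ) | ∀ j, 0 ≤ p.2 j} :=
  empirical_tail_copulas_stmt12_general P U hcont hunif R hR c₁ c₂ u₀ ε₀ hc₁ hc₂ hu₀ hε₀ δf hδf
    hcond
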